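/- arXiv:1401.7498 — 4 statements merged into one kernel-verified Lean document; each statement's English description precedes it below -/
import Mathlib

section
/- Let E: u = v be a word equation on n unknowns and let h: Ξ* → Σ* be a morphism of length type L ∈ ℕ^n. Then h is a solution of E if and only if Σ_{i=1}^{n} Q_{E, x_i, L} · P(h(x_i)) = 0 in ℤ[X]. -/
open Polynomial

/-- The characteristic polynomial `P(w)` of a word. -/
noncomputable def wordPoly (w : List ℕ) : Polynomial ℤ :=
  ∑ i ∈ Finset.range w.length, Polynomial.C (w.getD i 0 : ℤ) * Polynomial.X ^ i

/-- Application of a morphism (given by the images of the unknowns) to a word. -/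
def mApply {n : ℕ} {β : Type*} (h : Fin n → List β) (w : List (Fin n)) : List β :=
  (w.map h).flatten

/-- The morphism maps every unknown to a word over the alphabet `A`. -/
def IntoAlph {n : ℕ} (A : Finset ℕ) (h : Fin n → List ℕ) : Prop :=
  ∀ i, ∀ a ∈ h i, a ∈ A

/-- `w` is a product of words from `A`. -/
def InStar (A : Finset (List ℕ)) (w : List ℕ) : Prop :=
  ∃ l : List (List ℕ), (∀ u ∈ l, u ∈ A) ∧ l.flatten = w

/-- The combinatorial rank of a morphism: the smallest `r` such that there is a set of
`r` words whose products contain all images of the unknowns. -/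
noncomputable def mRank {n : ℕ} (h : Fin n → List ℕ) : ℕ :=
  sInf {r | ∃ A : Finset (List ℕ), A.card = r ∧ ∀ i, InStar A (h i)}

/-- The length type of a morphism, as a rational vector. -/
def lenQ {n : ℕ} (h : Fin n → List ℕ) : Fin n → ℚ :=
  fun i => ((h i).length : ℚ)

/-- `|w|_L`: the length of the image of `w` under any morphism of length type `L`. -/
def lenL {n : ℕ} (L : Fin n → ℕ) (w : List (Fin n)) : ℕ :=
  (w.map L).sum

/-- The polynomial `Q_{E,x,L}` for the word equation `u = v`, the unknown `x` and the
length type `L`. -/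
noncomputable def eqPoly {n : ℕ} (u v : List (Fin n)) (x : Fin n) (L : Fin n → ℕ) :
    Polynomial ℤ :=
  (∑ i ∈ Finset.range u.length,
      if u.getD i x = x then (Polynomial.X : Polynomial ℤ) ^ lenL L (u.take i) else 0)
    - ∑ i ∈ Finset.range v.length,
      if v.getD i x = x then (Polynomial.X : Polynomial ℤ) ^ lenL L (v.take i) else 0

/-- Embedding of `ℤ[X]` into the field `ℚ(X)` of rational functions. -/
noncomputable def toRF (p : Polynomial ℤ) : RatFunc ℚ :=
  algebraMap (Polynomial ℚ) (RatFunc ℚ) (p.map (Int.castRingHom ℚ))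


lemma wordPoly_coeff (w : List ℕ) (k : ℕ) : (wordPoly w).coeff k = (w.getD k 0 : ℤ) := by
  unfold wordPoly
  rw [Polynomial.finset_sum_coeff]
  simp only [Polynomial.coeff_C_mul, Polynomial.coeff_X_pow, mul_ite, mul_one, mul_zero]
  rw [Finset.sum_ite_eq (Finset.range w.length) k]
  by_cases hk : k < w.length
  · simp [hk]
  · rw [List.getD_eq_default _ _ (le_of_not_gt hk)]
    simp [hk]

lemma wordPoly_append (s t : List ℕ) :
    wordPoly (s ++ t) = wordPoly s + Polynomial.X ^ s.length * wordPoly t := by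
  ext k
  rw [wordPoly_coeff, Polynomial.coeff_add, wordPoly_coeff, Polynomial.coeff_X_pow_mul']
  by_cases hk : s.length ≤ k
  · rw [List.getD_eq_default _ _ hk, if_pos hk, wordPoly_coeff,
      List.getD_append_right _ _ _ _ hk]
    ring
  · rw [if_neg hk, List.getD_append _ _ _ _ (lt_of_not_ge hk)]
    ring

lemma wordPoly_injOn (w1 w2 : List ℕ) (h1 : ∀ a ∈ w1, 0 < a) (h2 : ∀ a ∈ w2, 0 < a)
    (he : wordPoly w1 = wordPoly w2) : w1 = w2 := by
  have hc : ∀ k, w1.getD k 0 = w2.getD k 0 := by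
    intro k
    have := congrArg (fun p => Polynomial.coeff p k) he
    simp only [wordPoly_coeff] at this
    exact_mod_cast this
  have hlen : w1.length = w2.length := by
    by_contra hne
    rcases lt_or_gt_of_ne hne with hlt | hlt
    · have h0 := hc w1.length
      rw [List.getD_eq_default _ _ le_rfl, List.getD_eq_getElem _ _ hlt] at h0
      exact absurd (h2 _ (List.getElem_mem hlt)) (by omega)
    · have h0 := hc w2.length
      rw [List.getD_eq_default w2 _ le_rfl, List.getD_eq_getElem _ _ hlt] at h0
      exact absurd (h1 _ (List.getElem_mem hlt)) (by omega)
  apply List.ext_getElem hlen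
  intro i hi1 hi2
  have := hc i
  rwa [List.getD_eq_getElem _ _ hi1, List.getD_eq_getElem _ _ hi2] at this

noncomputable def eqPolyF {n : ℕ} (L : Fin n → ℕ) (w : List (Fin n)) (x : Fin n) :
    Polynomial ℤ :=
  ∑ i ∈ Finset.range w.length,
    if w.getD i x = x then (Polynomial.X : Polynomial ℤ) ^ lenL L (w.take i) else 0

lemma eqPolyF_cons {n : ℕ} (L : Fin n → ℕ) (a : Fin n) (w : List (Fin n)) (x : Fin n) :
    eqPolyF L (a :: w) x =
      (if a = x then 1 else 0) + Polynomial.X ^ (L a) * eqPolyF L w x := by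
  unfold eqPolyF
  rw [List.length_cons, Finset.sum_range_succ']
  simp only [List.getD_cons_succ, List.getD_cons_zero, List.take_succ_cons, List.take_zero]
  rw [Finset.mul_sum, add_comm]
  congr 1; simp [lenL, pow_add]

lemma wordPoly_mApply {n : ℕ} (h : Fin n → List ℕ) (L : Fin n → ℕ)
    (hL : ∀ i, (h i).length = L i) (w : List (Fin n)) :
    wordPoly (mApply h w) = ∑ x : Fin n, eqPolyF L w x * wordPoly (h x) := by
  induction w with
  | nil =>
    simp [mApply, eqPolyF, wordPoly]
  | cons a w ih =>
    have hcons : mApply h (a :: w) = h a ++ mApply h w := by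
      simp [mApply]
    rw [hcons, wordPoly_append, hL a, ih]
    have : ∀ x : Fin n, eqPolyF L (a :: w) x * wordPoly (h x) =
        (if a = x then wordPoly (h x) else 0)
          + Polynomial.X ^ (L a) * (eqPolyF L w x * wordPoly (h x)) := by
      intro x
      rw [eqPolyF_cons, add_mul, mul_assoc]
      congr 1
      by_cases hx : a = x <;> simp [hx]
    simp only [this]
    rw [Finset.sum_add_distrib, ← Finset.mul_sum, Finset.sum_ite_eq Finset.univ a
      (fun x => wordPoly (h x)), if_pos (Finset.mem_univ a)]

/-- A morphism `h : Ξ* → Σ*` of length type `L` is a solution of the word equation `u = v`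
if and only if `∑ᵢ Q_{E,xᵢ,L} · P(h(xᵢ)) = 0`. -/
theorem solution_iff_poly_sum_eq_zero {n : ℕ}
    (A : Finset ℕ) (hA : ∀ a ∈ A, 0 < a)
    (u v : List (Fin n)) (h : Fin n → List ℕ) (hh : IntoAlph A h)
    (L : Fin n → ℕ) (hL : ∀ i, (h i).length = L i) :
    mApply h u = mApply h v ↔
      ∑ i : Fin n, eqPoly u v i L * wordPoly (h i) = 0 := by
  have hposu : ∀ a ∈ mApply h u, 0 < a := by
    intro a ha
    simp only [mApply, List.mem_flatten, List.mem_map] at ha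
    obtain ⟨l, ⟨x, _, rfl⟩, hal⟩ := ha
    exact hA a (hh x a hal)
  have hposv : ∀ a ∈ mApply h v, 0 < a := by
    intro a ha
    simp only [mApply, List.mem_flatten, List.mem_map] at ha
    obtain ⟨l, ⟨x, _, rfl⟩, hal⟩ := ha
    exact hA a (hh x a hal)
  have hsum : ∑ i : Fin n, eqPoly u v i L * wordPoly (h i)
      = wordPoly (mApply h u) - wordPoly (mApply h v) := by
    rw [wordPoly_mApply h L hL u, wordPoly_mApply h L hL v, ← Finset.sum_sub_distrib]
    apply Finset.sum_congr rfl
    intro x _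
    show eqPoly u v x L * wordPoly (h x) = _
    have : eqPoly u v x L = eqPolyF L u x - eqPolyF L v x := rfl
    rw [this, sub_mul]
  rw [hsum, sub_eq_zero]
  constructor
  · intro he; rw [he]
  · intro he
    exact wordPoly_injOn _ _ hposu hposv he
end

section
/- Let E₁, …, E_m be a system of word equations on n unknowns, let L ∈ ℕ^n, and let q_{ij} = Q_{E_i, x_j, L} for 1 ≤ i ≤ m, 1 ≤ j ≤ n. If the system has a common solution of rank r and length type L, then the rank of the m × n matrix (q_{ij}), viewed over the field ℚ(X) of rational functions, is at most n − r. -/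
open Polynomial

/-! The images of the solution `h` generate a free hull whose base `B` is a code, so every
`h x` factorizes uniquely over `B`; the factors occurring there form a set of at least `r` words,
each of which is the first factor of some `h x`. For such a factor `b`, replacing in these
factorizations every occurrence of `b` by a block of `1`s and every other factor by a block of
`0`s of the same length gives again a solution `g_b` of length type `L`, because both sides of
each equation have the same factorization. Since `∑ⱼ q_{ij} P(g(xⱼ)) = P(g(uᵢ)) - P(g(vᵢ))` for
every `g` of length type `L`, the vectors `(P(g_b(xⱼ)))ⱼ` lie in the kernel of `(q_{ij})`, and
they are linearly independent because their constant terms at the unknowns whose factorization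
starts with `b` form an identity matrix. -/

open scoped Matrix

section WordPoly

theorem wordPoly_cons (a : ℕ) (w : List ℕ) :
    wordPoly (a :: w) = C (a : ℤ) + X * wordPoly w := by
  simp only [wordPoly, List.length_cons, Finset.sum_range_succ', List.getD_cons_succ,
    List.getD_cons_zero, pow_zero, mul_one, Finset.mul_sum, pow_succ]
  rw [add_comm]
  congr 1
  exact Finset.sum_congr rfl fun _ _ => by ring

theorem wordPoly_append_s7 (u w : List ℕ) :
    wordPoly (u ++ w) = wordPoly u + X ^ u.length * wordPoly w := by
  induction u with
  | nil => simp [wordPoly]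
  | cons a u ih =>
    rw [List.cons_append, wordPoly_cons, wordPoly_cons, ih, List.length_cons, pow_succ]
    ring

theorem coeff_wordPoly_zero (w : List ℕ) : (wordPoly w).coeff 0 = (w.headD 0 : ℤ) := by
  cases w with
  | nil => simp [wordPoly]
  | cons a w => simp [wordPoly_cons]

end WordPoly

theorem mApply_cons {n : ℕ} {β : Type*} (h : Fin n → List β) (y : Fin n) (w : List (Fin n)) :
    mApply h (y :: w) = h y ++ mApply h w := rfl

section OccurrencePoly

variable {n : ℕ}

noncomputable def occurrencePoly (u : List (Fin n)) (x : Fin n) (L : Fin n → ℕ) : ℤ[X] :=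
  ∑ i ∈ Finset.range u.length, if u.getD i x = x then (X : ℤ[X]) ^ lenL L (u.take i) else 0

theorem eqPoly_eq_sub (u v : List (Fin n)) (x : Fin n) (L : Fin n → ℕ) :
    eqPoly u v x L = occurrencePoly u x L - occurrencePoly v x L := rfl

theorem occurrencePoly_cons (y : Fin n) (u : List (Fin n)) (x : Fin n) (L : Fin n → ℕ) :
    occurrencePoly (y :: u) x L = (if y = x then 1 else 0) + X ^ L y * occurrencePoly u x L := by
  simp only [occurrencePoly, List.length_cons, Finset.sum_range_succ', List.getD_cons_succ,
    List.getD_cons_zero, List.take_succ_cons, List.take_zero, Finset.mul_sum, mul_ite, mul_zero]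
  simp [lenL, pow_add, add_comm]

theorem sum_occurrencePoly_mul_wordPoly {g : Fin n → List ℕ} {L : Fin n → ℕ}
    (hg : ∀ j, (g j).length = L j) (u : List (Fin n)) :
    ∑ j, occurrencePoly u j L * wordPoly (g j) = wordPoly (mApply g u) := by
  induction u with
  | nil => simp [occurrencePoly, mApply, wordPoly]
  | cons y u ih =>
    simp only [occurrencePoly_cons, add_mul, Finset.sum_add_distrib, ite_mul, one_mul, zero_mul,
      Finset.sum_ite_eq, Finset.mem_univ, if_true, mul_assoc, ← Finset.mul_sum, ih]
    rw [mApply_cons, wordPoly_append_s7, hg]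

theorem sum_eqPoly_mul_wordPoly_eq_zero {g : Fin n → List ℕ} {L : Fin n → ℕ}
    (hg : ∀ j, (g j).length = L j) {u v : List (Fin n)} (hsol : mApply g u = mApply g v) :
    ∑ j, eqPoly u v j L * wordPoly (g j) = 0 := by
  simp only [eqPoly_eq_sub, sub_mul, Finset.sum_sub_distrib,
    sum_occurrencePoly_mul_wordPoly hg, hsol, sub_self]

end OccurrencePoly

section LinearAlgebra

theorem Polynomial.coeff_mul_of_coeff_eq_zero_of_lt {R : Type*} [Semiring R] {p q : R[X]}
    {t : ℕ} (hp : ∀ a < t, p.coeff a = 0) : (p * q).coeff t = p.coeff t * q.coeff 0 := by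
  rw [coeff_mul, Finset.sum_eq_single (t, 0)]
  · rintro ⟨a, c⟩ hac hne
    rw [Finset.HasAntidiagonal.mem_antidiagonal] at hac
    rw [hp a (by grind), zero_mul]
  · simp

theorem linearIndependent_of_coeff_zero_eq_ite {R ι σ : Type*} [CommRing R] [Fintype ι]
    [DecidableEq ι] {v : ι → σ → R[X]} (j : ι → σ)
    (hv : ∀ b b', (v b' (j b)).coeff 0 = if b' = b then 1 else 0) :
    LinearIndependent R[X] v := by
  classical
  rw [Fintype.linearIndependent_iff]
  intro c hc
  by_contra! hne
  obtain ⟨b, hb, hmin⟩ := (Finset.univ.filter (c · ≠ 0)).exists_min_image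
    (fun b => (c b).natTrailingDegree) (by simpa [Finset.Nonempty] using hne)
  set t := (c b).natTrailingDegree
  have hlow : ∀ b', ∀ a < t, (c b').coeff a = 0 := by
    intro b' a ha
    by_cases hb' : c b' = 0
    · simp [hb']
    · exact coeff_eq_zero_of_lt_natTrailingDegree (ha.trans_le (hmin b' (by simpa using hb')))
  -- the coefficient of `X ^ t` at coordinate `j b` only sees `c b`
  have hcoeff := congrArg (fun w => (w (j b)).coeff t) hc
  simp only [Finset.sum_apply, Pi.smul_apply, smul_eq_mul, finsetSum_coeff, Pi.zero_apply,
    coeff_zero, coeff_mul_of_coeff_eq_zero_of_lt (hlow _), hv, mul_ite, mul_one, mul_zero,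
    Finset.sum_ite_eq', Finset.mem_univ, if_true] at hcoeff
  exact (Finset.mem_filter.mp hb).2 (trailingCoeff_eq_zero.mp hcoeff)

theorem LinearIndependent.algebraMap_comp {R K ι σ : Type*} [CommRing R] [IsDomain R] [Field K]
    [Algebra R K] [IsFractionRing R K] {v : ι → σ → R} (hv : LinearIndependent R v) :
    LinearIndependent K fun i => algebraMap R K ∘ v i := by
  rw [← LinearIndependent.iff_fractionRing R K]
  refine hv.map' ((Algebra.linearMap R K).compLeft σ) (LinearMap.ker_eq_bot.mpr ?_)
  exact fun w w' hw => funext fun s => IsFractionRing.injective R K (congrFun hw s)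

theorem Matrix.rank_le_card_sub_of_mulVec_eq_zero {K m n ι : Type*} [Field K] [Fintype n]
    [Fintype ι] {M : Matrix m n K} {v : ι → n → K} (hv : LinearIndependent K v)
    (hker : ∀ i, M *ᵥ v i = 0) : M.rank ≤ Fintype.card n - Fintype.card ι := by
  have hcard : Fintype.card ι ≤ Module.finrank K (LinearMap.ker M.mulVecLin) :=
    LinearIndependent.fintype_card_le_finrank (b := fun i => ⟨v i, hker i⟩)
      (.of_comp (LinearMap.ker M.mulVecLin).subtype hv)
  have := LinearMap.finrank_range_add_finrank_ker M.mulVecLin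
  rw [Module.finrank_pi] at this
  unfold Matrix.rank
  omega

end LinearAlgebra

section FreeHull

variable {α : Type*}

structure IsStableSubmonoid (M : Set (List α)) : Prop where
  nil_mem : [] ∈ M
  append_mem {u v : List α} : u ∈ M → v ∈ M → u ++ v ∈ M
  mem_of_append_mem {p u q : List α} :
    p ∈ M → q ∈ M → p ++ u ∈ M → u ++ q ∈ M → u ∈ M

def freeHull (S : Set (List α)) : Set (List α) :=
  ⋂₀ {M | IsStableSubmonoid M ∧ S ⊆ M}

def freeHullBase (S : Set (List α)) : Set (List α) :=
  {b | b ∈ freeHull S ∧ b ≠ [] ∧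
    ∀ u ∈ freeHull S, ∀ v ∈ freeHull S, u ≠ [] → v ≠ [] → u ++ v ≠ b}

variable {S : Set (List α)}

theorem isStableSubmonoid_freeHull : IsStableSubmonoid (freeHull S) where
  nil_mem _ hM := hM.1.nil_mem
  append_mem hu hv _ hM := hM.1.append_mem (hu _ hM) (hv _ hM)
  mem_of_append_mem hp hq hpu huq _ hM :=
    hM.1.mem_of_append_mem (hp _ hM) (hq _ hM) (hpu _ hM) (huq _ hM)

theorem subset_freeHull : S ⊆ freeHull S := fun _ hs _ hM => hM.2 hs

theorem freeHull_subset {M : Set (List α)} (hM : IsStableSubmonoid M) (hS : S ⊆ M) :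
    freeHull S ⊆ M :=
  Set.sInter_subset_of_mem ⟨hM, hS⟩

theorem flatten_mem_freeHull {l : List (List α)} (hl : ∀ u ∈ l, u ∈ freeHullBase S) :
    l.flatten ∈ freeHull S := by
  induction l with
  | nil => exact isStableSubmonoid_freeHull.nil_mem
  | cons a l ih =>
    exact isStableSubmonoid_freeHull.append_mem (hl a (by simp)).1
      (ih fun u hu => hl u (by simp [hu]))

theorem exists_flatten_eq_of_mem_freeHull {m : List α} (hm : m ∈ freeHull S) :
    ∃ l : List (List α), (∀ u ∈ l, u ∈ freeHullBase S) ∧ l.flatten = m := by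
  induction hlen : m.length using Nat.strong_induction_on generalizing m with
  | _ N ih =>
    by_cases hnil : m = []
    · exact ⟨[], by simp, by simp [hnil]⟩
    by_cases hbase : m ∈ freeHullBase S
    · exact ⟨[m], by simpa using hbase, by simp⟩
    obtain ⟨u, hu, v, hv, hu0, hv0, rfl⟩ :
        ∃ u ∈ freeHull S, ∃ v ∈ freeHull S, u ≠ [] ∧ v ≠ [] ∧ u ++ v = m := by
      simpa [freeHullBase, hm, hnil] using hbase
    have hu_len := List.length_pos_iff.mpr hu0
    have hv_len := List.length_pos_iff.mpr hv0
    obtain ⟨lu, hlu, hlu_flat⟩ := ih u.length (by simp [← hlen]; omega) hu rfl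
    obtain ⟨lv, hlv, hlv_flat⟩ := ih v.length (by simp [← hlen]; omega) hv rfl
    exact ⟨lu ++ lv, by simpa [or_imp, forall_and] using ⟨hlu, hlv⟩,
      by simp [hlu_flat, hlv_flat]⟩

theorem eq_nil_of_append_eq {a c u s s' : List α} (ha : a ∈ freeHull S)
    (hc : c ∈ freeHullBase S) (hs : s ∈ freeHull S) (hs' : s' ∈ freeHull S) (ha0 : a ≠ [])
    (hcu : c = a ++ u) (hsu : s = u ++ s') : u = [] := by
  by_contra hu0
  have hu : u ∈ freeHull S :=
    isStableSubmonoid_freeHull.mem_of_append_mem ha hs' (hcu ▸ hc.1) (hsu ▸ hs)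
  exact hc.2.2 a ha u hu ha0 hu0 hcu.symm

theorem eq_of_append_eq_append {a c s s' : List α} (ha : a ∈ freeHullBase S)
    (hc : c ∈ freeHullBase S) (hs : s ∈ freeHull S) (hs' : s' ∈ freeHull S)
    (h : a ++ s = c ++ s') : a = c := by
  rcases List.append_eq_append_iff.mp h with ⟨u, hcu, hsu⟩ | ⟨u, hau, hsu⟩
  · simp [hcu, eq_nil_of_append_eq ha.1 hc hs hs' ha.2.1 hcu hsu]
  · simp [hau, eq_nil_of_append_eq hc.1 ha hs' hs hc.2.1 hau hsu]

theorem eq_of_flatten_eq {l l' : List (List α)} (hl : ∀ u ∈ l, u ∈ freeHullBase S)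
    (hl' : ∀ u ∈ l', u ∈ freeHullBase S) (h : l.flatten = l'.flatten) : l = l' := by
  induction l generalizing l' with
  | nil =>
    cases l' with
    | nil => rfl
    | cons c l' =>
      exact absurd (List.flatten_eq_nil_iff.mp h.symm c (by simp)) (hl' c (by simp)).2.1
  | cons a l ih =>
    cases l' with
    | nil => exact absurd (List.flatten_eq_nil_iff.mp h a (by simp)) (hl a (by simp)).2.1
    | cons c l' =>
      have hrest : ∀ u ∈ l, u ∈ freeHullBase S := fun u hu => hl u (by simp [hu])
      have hrest' : ∀ u ∈ l', u ∈ freeHullBase S := fun u hu => hl' u (by simp [hu])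
      obtain rfl : a = c := eq_of_append_eq_append (hl a (by simp)) (hl' c (by simp))
        (flatten_mem_freeHull hrest) (flatten_mem_freeHull hrest') h
      rw [ih hrest hrest' (List.append_cancel_left h)]

theorem isStableSubmonoid_setOf_head_ne (b : List α) :
    IsStableSubmonoid {m | ∃ l : List (List α), (∀ u ∈ l, u ∈ freeHullBase S) ∧
      l.flatten = m ∧ l.head? ≠ some b} where
  nil_mem := ⟨[], by simp, rfl, by simp⟩
  append_mem := by
    rintro u v ⟨lu, hlu, rfl, hu⟩ ⟨lv, hlv, rfl, hv⟩
    refine ⟨lu ++ lv, by simpa [or_imp, forall_and] using ⟨hlu, hlv⟩, by simp, ?_⟩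
    cases lu <;> simp_all
  mem_of_append_mem := by
    rintro p u q ⟨lp, hlp, rfl, -⟩ ⟨lq, hlq, rfl, -⟩ ⟨lpu, hlpu, hpu, -⟩
      ⟨l, hl, hflat, hhead⟩
    have hu : u ∈ freeHull S := isStableSubmonoid_freeHull.mem_of_append_mem
      (flatten_mem_freeHull hlp) (flatten_mem_freeHull hlq) (hpu ▸ flatten_mem_freeHull hlpu)
      (hflat ▸ flatten_mem_freeHull hl)
    obtain ⟨lu, hlu, rfl⟩ := exists_flatten_eq_of_mem_freeHull hu
    obtain rfl : l = lu ++ lq := eq_of_flatten_eq hl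
      (by simpa [or_imp, forall_and] using ⟨hlu, hlq⟩) (by simp [hflat])
    refine ⟨lu, hlu, rfl, ?_⟩
    cases lu <;> simp_all

theorem exists_head?_eq {ι : Type*} {h : ι → List α} {fct : ι → List (List α)}
    (hbase : ∀ i, ∀ u ∈ fct i, u ∈ freeHullBase (Set.range h))
    (hflat : ∀ i, (fct i).flatten = h i) {b : List α} (hb : b ∈ freeHullBase (Set.range h)) :
    ∃ i, (fct i).head? = some b := by
  by_contra! hne
  have hrange : Set.range h ⊆ {m | ∃ l : List (List α),
      (∀ u ∈ l, u ∈ freeHullBase (Set.range h)) ∧ l.flatten = m ∧ l.head? ≠ some b} := by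
    rintro _ ⟨i, rfl⟩
    exact ⟨fct i, hbase i, hflat i, hne i⟩
  obtain ⟨l, hl, hflat_b, hhead⟩ :=
    freeHull_subset (isStableSubmonoid_setOf_head_ne b) hrange hb.1
  obtain rfl : l = [b] := eq_of_flatten_eq hl (by simpa using hb) (by simp [hflat_b])
  simp at hhead

end FreeHull

section IndicatorWord

variable {α : Type*} [DecidableEq α]

def indicatorWord (b : List α) (l : List (List α)) : List ℕ :=
  (l.map fun u => List.replicate u.length (if u = b then 1 else 0)).flatten

theorem length_indicatorWord (b : List α) (l : List (List α)) :
    (indicatorWord b l).length = l.flatten.length := by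
  simp [indicatorWord, List.length_flatten, Function.comp_def]

theorem coeff_wordPoly_indicatorWord_cons_zero (b : List α) {u : List α} (hu : u ≠ [])
    (l : List (List α)) :
    (wordPoly (indicatorWord b (u :: l))).coeff 0 = if u = b then 1 else 0 := by
  obtain ⟨a, u, rfl⟩ := List.exists_cons_of_ne_nil hu
  by_cases hab : a :: u = b
  · subst hab
    simp [coeff_wordPoly_zero, indicatorWord, List.replicate_succ]
  · simp [coeff_wordPoly_zero, indicatorWord, List.replicate_succ, hab]

theorem mApply_indicatorWord {n : ℕ} (fct : Fin n → List (List α)) (b : List α)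
    (w : List (Fin n)) :
    mApply (fun j => indicatorWord b (fct j)) w = indicatorWord b (w.map fct).flatten := by
  simp [mApply, indicatorWord, List.map_flatten, List.flatten_flatten, Function.comp_def]

theorem mApply_indicatorWord_eq {n : ℕ} {h : Fin n → List α} {fct : Fin n → List (List α)}
    (hbase : ∀ j, ∀ u ∈ fct j, u ∈ freeHullBase (Set.range h))
    (hflat : ∀ j, (fct j).flatten = h j) (b : List α) {u v : List (Fin n)}
    (hsol : mApply h u = mApply h v) :
    mApply (fun j => indicatorWord b (fct j)) u =
      mApply (fun j => indicatorWord b (fct j)) v := by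
  have hmem : ∀ w : List (Fin n), ∀ c ∈ (w.map fct).flatten,
      c ∈ freeHullBase (Set.range h) := by
    simp only [List.mem_flatten, List.mem_map]
    rintro w c ⟨_, ⟨j, -, rfl⟩, hc⟩
    exact hbase j c hc
  have hfactor : ∀ w : List (Fin n), ((w.map fct).flatten).flatten = mApply h w := by
    simp [mApply, List.flatten_flatten, Function.comp_def, hflat]
  rw [mApply_indicatorWord, mApply_indicatorWord,
    eq_of_flatten_eq (hmem u) (hmem v) (by rw [hfactor, hfactor, hsol])]

end IndicatorWord

theorem mRank_le_card {n : ℕ} {h : Fin n → List ℕ} {fct : Fin n → List (List ℕ)}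
    {B : Finset (List ℕ)} (hB : ∀ j, ∀ u ∈ fct j, u ∈ B)
    (hflat : ∀ j, (fct j).flatten = h j) :
    mRank h ≤ B.card :=
  Nat.sInf_le ⟨B, rfl, fun j => ⟨fct j, hB j, hflat j⟩⟩

noncomputable def toRFRingHom : ℤ[X] →+* RatFunc ℚ :=
  (algebraMap ℚ[X] (RatFunc ℚ)).comp (mapRingHom (Int.castRingHom ℚ))

theorem toRFRingHom_apply (p : ℤ[X]) : toRFRingHom p = toRF p := rfl

theorem mulVec_toRF_wordPoly_eq_zero {n m : ℕ} {eqs : Fin m → List (Fin n) × List (Fin n)}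
    {L : Fin n → ℕ} {g : Fin n → List ℕ} (hg : ∀ j, (g j).length = L j)
    (hsol : ∀ i, mApply g (eqs i).1 = mApply g (eqs i).2) :
    (Matrix.of fun i j => toRF (eqPoly (eqs i).1 (eqs i).2 j L)) *ᵥ
      (fun j => toRF (wordPoly (g j))) = 0 := by
  funext i
  simp only [Matrix.mulVec, dotProduct, Matrix.of_apply, ← toRFRingHom_apply, ← map_mul,
    ← map_sum, sum_eqPoly_mul_wordPoly_eq_zero hg (hsol i), map_zero, Pi.zero_apply]

theorem matrix_rank_le_general {n m : ℕ}
    (eqs : Fin m → List (Fin n) × List (Fin n))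
    (L : Fin n → ℕ)
    (h : Fin n → List ℕ)
    (hsol : ∀ i, mApply h (eqs i).1 = mApply h (eqs i).2)
    (r : ℕ) (hr : mRank h = r)
    (hL : ∀ j, (h j).length = L j) :
    Matrix.rank (Matrix.of fun (i : Fin m) (j : Fin n) =>
      toRF (eqPoly (eqs i).1 (eqs i).2 j L)) ≤ n - r := by
  classical
  choose fct hfct_base hfct_flat using fun j =>
    exists_flatten_eq_of_mem_freeHull (subset_freeHull (Set.mem_range_self (f := h) j))
  let B : Finset (List ℕ) := Finset.univ.biUnion fun j => (fct j).toFinset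
  have hB : ∀ b : B, (b : List ℕ) ∈ freeHullBase (Set.range h) := by
    rintro ⟨b, hb⟩
    obtain ⟨j, -, hj⟩ := Finset.mem_biUnion.mp hb
    exact hfct_base j b (List.mem_toFinset.mp hj)
  have hrB : r ≤ B.card := hr ▸ mRank_le_card (fun j u hu =>
    Finset.mem_biUnion.mpr ⟨j, Finset.mem_univ j, List.mem_toFinset.mpr hu⟩) hfct_flat
  choose first hfirst using fun b : B => exists_head?_eq hfct_base hfct_flat (hB b)
  let g : B → Fin n → List ℕ := fun b j => indicatorWord (b : List ℕ) (fct j)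
  have hli : LinearIndependent (RatFunc ℚ) fun b j => toRF (wordPoly (g b j)) := by
    refine LinearIndependent.algebraMap_comp (linearIndependent_of_coeff_zero_eq_ite first ?_)
    intro b b'
    obtain ⟨rest, hrest⟩ := List.head?_eq_some_iff.mp (hfirst b)
    rw [coeff_map]
    simp only [g, hrest, coeff_wordPoly_indicatorWord_cons_zero _ (hB b).2.1]
    rcases eq_or_ne b' b with rfl | hne
    · simp
    · simp [hne, Subtype.coe_injective.ne hne.symm]
  have hker : ∀ b, (Matrix.of fun i j => toRF (eqPoly (eqs i).1 (eqs i).2 j L)) *ᵥ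
      (fun j => toRF (wordPoly (g b j))) = 0 := fun b =>
    mulVec_toRF_wordPoly_eq_zero (fun j => by simp [g, length_indicatorWord, hfct_flat, hL])
      fun i => mApply_indicatorWord_eq hfct_base hfct_flat b (hsol i)
  have := Matrix.rank_le_card_sub_of_mulVec_eq_zero hli hker
  simp only [Fintype.card_fin, Fintype.card_coe] at this
  omega

/-- If a system of word equations on `n` unknowns has a common solution of rank `r` and
length type `L`, then the `m × n` matrix of the polynomials `Q_{Eᵢ,xⱼ,L}`, viewed over the
field `ℚ(X)`, has rank at most `n − r`. -/
theorem matrix_rank_le {n m : ℕ}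
    (A : Finset ℕ) (hA : ∀ a ∈ A, 0 < a)
    (eqs : Fin m → List (Fin n) × List (Fin n))
    (L : Fin n → ℕ)
    (h : Fin n → List ℕ) (hh : IntoAlph A h)
    (hsol : ∀ i, mApply h (eqs i).1 = mApply h (eqs i).2)
    (r : ℕ) (hr : mRank h = r)
    (hL : ∀ j, (h j).length = L j) :
    Matrix.rank (Matrix.of fun (i : Fin m) (j : Fin n) =>
      toRF (eqPoly (eqs i).1 (eqs i).2 j L)) ≤ n - r :=
  matrix_rank_le_general eqs L h hsol r hr hL
end

section
/- (Graph lemma) Consider a system of word equations on the unknowns Ξ = {x₁, …, x_n} and the graph on vertex set Ξ in which there is an edge between distinct unknowns x and y whenever one of the equations of the system has its left-hand side beginning with x and its right-hand side beginning with y (or vice versa). If this graph has r connected components and h is a solution of the system with h(x_i) ≠ ε for all i, then the rank of h is at most r. -/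
open Polynomial

/-!
Take an edge `x – y` of the graph, coming from an equation `x u = y v`. Then `h x ++ h u =
h y ++ h v`, so one of `h x`, `h y` is a prefix of the other, say `h x = h y ++ d`. If `d` is
empty, `x` and `y` have the same image and can be identified, which removes an unknown. Otherwise
substitute `y x` for `x` and send `x` to `d`; cancelling `h y` in the chosen equation yields the
extra equation `x u' = v'`, which links `x` to the component of the first letter of `v`. In both
cases the new solution is shorter, its graph has no more components than the old one, and every
set of words generating the new images generates the old ones. Induction on the total length
ends at a graph without edges, where the images of the unknowns themselves form a generating set
of the required size.
-/

open SimpleGraph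

section Words

variable {ι ι' : Type*}

lemma head?_flatMap {φ : ι → List ι'} {σ : ι → ι'} (hσ : ∀ i, (φ i).head? = some (σ i))
    {w : List ι} {a : ι} (hw : w.head? = some a) : (w.flatMap φ).head? = some (σ a) := by
  obtain ⟨t, rfl⟩ := List.head?_eq_some_iff.1 hw
  simp [List.head?_append, hσ]

lemma InStar.append {A : Finset (List ℕ)} {u v : List ℕ} (hu : InStar A u) (hv : InStar A v) :
    InStar A (u ++ v) := by
  obtain ⟨l₁, hl₁, rfl⟩ := hu
  obtain ⟨l₂, hl₂, rfl⟩ := hv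
  exact ⟨l₁ ++ l₂, fun w hw => (List.mem_append.1 hw).elim (hl₁ w) (hl₂ w), by simp⟩

lemma InStar.flatMap {A : Finset (List ℕ)} {g : ι → List ℕ} (hg : ∀ i, InStar A (g i))
    (w : List ι) : InStar A (w.flatMap g) := by
  induction w with
  | nil => exact ⟨[], by simp, rfl⟩
  | cons a w ih => simpa only [List.flatMap_cons] using (hg a).append ih

lemma mRank_le_card_s9 {n : ℕ} {h : Fin n → List ℕ} {A : Finset (List ℕ)}
    (hA : ∀ i, InStar A (h i)) : mRank h ≤ A.card :=
  Nat.sInf_le ⟨A, rfl, hA⟩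

end Words

section Graphs

variable {V V' : Type*}

lemma card_connectedComponent_le_of_reachable [Finite V] (G : SimpleGraph V)
    (G' : SimpleGraph V') (f : V → V') (hadj : ∀ a b, G.Adj a b → G'.Reachable (f a) (f b))
    (hsurj : ∀ v', ∃ v, G'.Reachable (f v) v') :
    Nat.card G'.ConnectedComponent ≤ Nat.card G.ConnectedComponent := by
  have hreach : ∀ a b, G.Reachable a b → G'.Reachable (f a) (f b) := by
    simp only [reachable_iff_reflTransGen] at hadj ⊢
    exact Relation.ReflTransGen.lift' f hadj
  let F : G.ConnectedComponent → G'.ConnectedComponent :=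
    ConnectedComponent.lift (fun v => G'.connectedComponentMk (f v))
      (fun v w p _ => ConnectedComponent.sound (hreach v w ⟨p⟩))
  refine Nat.card_le_card_of_surjective F fun c' => ?_
  induction c' using ConnectedComponent.ind with
  | h v' =>
    obtain ⟨v, hv⟩ := hsurj v'
    exact ⟨G.connectedComponentMk v, ConnectedComponent.sound hv⟩

lemma card_le_card_connectedComponent_of_forall_not_adj [Finite V] (G : SimpleGraph V)
    (hG : ∀ a b, ¬ G.Adj a b) : Nat.card V ≤ Nat.card G.ConnectedComponent := by
  obtain rfl : G = ⊥ := by ext a b; simp [hG]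
  refine Nat.card_le_card_of_injective (⊥ : SimpleGraph V).connectedComponentMk fun a b hab => ?_
  exact reachable_bot.1 (ConnectedComponent.exact hab)

end Graphs

section WordEquations

variable {ι ι' : Type*}

def IsSolution (S : Set (List ι × List ι)) (h : ι → List ℕ) : Prop :=
  ∀ e ∈ S, e.1.flatMap h = e.2.flatMap h

def headGraph (S : Set (List ι × List ι)) : SimpleGraph ι :=
  SimpleGraph.fromRel fun x y => ∃ e ∈ S, e.1.head? = some x ∧ e.2.head? = some y

lemma headGraph_reachable {S : Set (List ι × List ι)} {e : List ι × List ι} (he : e ∈ S)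
    {a b : ι} (ha : e.1.head? = some a) (hb : e.2.head? = some b) :
    (headGraph S).Reachable a b := by
  by_cases hab : a = b
  · exact hab ▸ Reachable.refl a
  · exact Adj.reachable ((fromRel_adj _ a b).2 ⟨hab, Or.inl ⟨e, he, ha, hb⟩⟩)

lemma IsSolution.image_prodMap {S : Set (List ι × List ι)} {h : ι → List ℕ}
    {h' : ι' → List ℕ} {φ : ι → List ι'} (hS : IsSolution S h)
    (hφ : ∀ i, (φ i).flatMap h' = h i) :
    IsSolution (Prod.map (List.flatMap φ) (List.flatMap φ) '' S) h' := by
  rintro _ ⟨e, he, rfl⟩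
  simpa only [Prod.map, List.flatMap_assoc, hφ] using hS e he

lemma card_connectedComponent_headGraph_le [Finite ι] {S : Set (List ι × List ι)}
    {S' : Set (List ι' × List ι')} (φ : ι → List ι') (σ : ι → ι')
    (hσ : ∀ i, (φ i).head? = some (σ i))
    (hS : Prod.map (List.flatMap φ) (List.flatMap φ) '' S ⊆ S')
    (hsurj : ∀ v', ∃ v, (headGraph S').Reachable (σ v) v') :
    Nat.card (headGraph S').ConnectedComponent ≤ Nat.card (headGraph S).ConnectedComponent := by
  refine card_connectedComponent_le_of_reachable _ _ σ (fun a b hab => ?_) hsurj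
  have hmem : ∀ e ∈ S, Prod.map (List.flatMap φ) (List.flatMap φ) e ∈ S' := fun e he =>
    hS (Set.mem_image_of_mem _ he)
  obtain ⟨-, ⟨e, he, ha, hb⟩ | ⟨e, he, hb, ha⟩⟩ := (fromRel_adj _ a b).1 hab
  · exact headGraph_reachable (hmem e he) (head?_flatMap hσ ha) (head?_flatMap hσ hb)
  · exact (headGraph_reachable (hmem e he) (head?_flatMap hσ hb) (head?_flatMap hσ ha)).symm

lemma IsSolution.exists_eq_append_of_adj {S : Set (List ι × List ι)} {h : ι → List ℕ}
    (hS : IsSolution S h) {a b : ι} (hab : (headGraph S).Adj a b) :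
    ∃ x y : ι, x ≠ y ∧ ∃ (d : List ℕ) (u v : List ι),
      h x = h y ++ d ∧ v.flatMap h = d ++ u.flatMap h := by
  have key : ∀ e ∈ S, ∀ x y, x ≠ y → e.1.head? = some x → e.2.head? = some y →
      ∃ x y : ι, x ≠ y ∧ ∃ (d : List ℕ) (u v : List ι),
        h x = h y ++ d ∧ v.flatMap h = d ++ u.flatMap h := by
    intro e he x y hxy hx hy
    obtain ⟨u, hu⟩ := List.head?_eq_some_iff.1 hx
    obtain ⟨v, hv⟩ := List.head?_eq_some_iff.1 hy
    have heq : h x ++ u.flatMap h = h y ++ v.flatMap h := by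
      simpa [hu, hv] using hS e he
    rcases List.append_eq_append_iff.1 heq with ⟨d, hyd, hud⟩ | ⟨d, hxd, hvd⟩
    · exact ⟨y, x, hxy.symm, d, v, u, hyd, hud⟩
    · exact ⟨x, y, hxy, d, u, v, hxd, hvd⟩
  obtain ⟨hab, ⟨e, he, ha, hb⟩ | ⟨e, he, hb, ha⟩⟩ := (fromRel_adj _ a b).1 hab
  exacts [key e he a b hab ha hb, key e he b a hab.symm hb ha]

variable [Fintype ι] [Fintype ι']

structure IsReduction (S : Set (List ι × List ι)) (h : ι → List ℕ)
    (S' : Set (List ι' × List ι')) (h' : ι' → List ℕ) : Prop where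
  ne_nil : ∀ i, h' i ≠ []
  isSolution : IsSolution S' h'
  length_lt : ∑ i, (h' i).length < ∑ i, (h i).length
  card_le : Nat.card (headGraph S').ConnectedComponent ≤ Nat.card (headGraph S).ConnectedComponent
  inStar : ∀ A, (∀ i, InStar A (h' i)) → ∀ i, InStar A (h i)

variable [DecidableEq ι] {S : Set (List ι × List ι)} {h : ι → List ℕ}

lemma isReduction_of_eq (hne : ∀ i, h i ≠ []) (hS : IsSolution S h) {x y : ι} (hxy : x ≠ y)
    (hhxy : h x = h y) :
    let π : ι → {z // z ≠ x} := fun z => if hz : z = x then ⟨y, hxy.symm⟩ else ⟨z, hz⟩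
    IsReduction S h (Prod.map (List.flatMap fun z => [π z]) (List.flatMap fun z => [π z]) '' S)
      (fun z => h z) := by
  intro π
  have hπ : ∀ z, [π z].flatMap (fun z : {z // z ≠ x} => h z) = h z := by
    intro z
    by_cases hz : z = x
    · subst hz; simp [π, hhxy]
    · simp [π, hz]
  refine ⟨fun z => hne z, hS.image_prodMap hπ, ?_, ?_, fun A hA z => hπ z ▸ InStar.flatMap hA _⟩
  · rw [← Finset.sum_subtype (p := (· ≠ x)) (Finset.univ.erase x) (by simp) fun z => (h z).length]
    exact Finset.sum_erase_lt_of_pos (Finset.mem_univ x) (List.length_pos_iff.2 (hne x))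
  · refine card_connectedComponent_headGraph_le _ π (fun _ => rfl) subset_rfl fun v' => ?_
    exact ⟨v', by simp [π, v'.2]⟩

lemma isReduction_of_eq_append (hne : ∀ i, h i ≠ []) (hS : IsSolution S h) {x y : ι}
    (hxy : x ≠ y) {d : List ℕ} (hd : d ≠ []) (hxd : h x = h y ++ d) {u v : List ι}
    (huv : v.flatMap h = d ++ u.flatMap h) :
    let φ : ι → List ι := fun z => if z = x then [y, x] else [z]
    IsReduction S h
      (insert (x :: u.flatMap φ, v.flatMap φ) (Prod.map (List.flatMap φ) (List.flatMap φ) '' S))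
      (Function.update h x d) := by
  intro φ
  have hφ : ∀ z, (φ z).flatMap (Function.update h x d) = h z := by
    intro z
    by_cases hz : z = x
    · subst hz; simp [φ, hxy.symm, hxd]
    · simp [φ, hz]
  have hv : v ≠ [] := by
    rintro rfl
    simp [eq_comm (a := []), hd] at huv
  refine ⟨fun z => ?_, ?_, ?_, ?_, fun A hA z => hφ z ▸ InStar.flatMap hA _⟩
  · by_cases hz : z = x
    · simpa [hz] using hd
    · simpa [hz] using hne z
  · refine Set.forall_mem_insert.2 ⟨?_, hS.image_prodMap hφ⟩
    simp only [List.flatMap_cons, List.flatMap_assoc, hφ, Function.update_self, huv]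
  · refine Finset.sum_lt_sum (fun z _ => ?_) ⟨x, Finset.mem_univ x, ?_⟩
    · by_cases hz : z = x
      · simp [hz, hxd]
      · simp [hz]
    · simpa [hxd] using List.length_pos_iff.2 (hne y)
  · let σ : ι → ι := fun z => if z = x then y else z
    have hσ : ∀ z, (φ z).head? = some (σ z) := fun z => by
      by_cases hz : z = x <;> simp [φ, σ, hz]
    refine card_connectedComponent_headGraph_le φ σ hσ (Set.subset_insert _ _) fun v' => ?_
    by_cases hv' : v' = x
    · obtain ⟨c, w, rfl⟩ := List.exists_cons_of_ne_nil hv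
      exact ⟨c, hv' ▸ (headGraph_reachable (Set.mem_insert _ _) rfl (head?_flatMap hσ rfl)).symm⟩
    · exact ⟨v', by simp [σ, hv']⟩

theorem IsSolution.exists_inStar_card_le {ι : Type*} [Fintype ι] [DecidableEq ι]
    {S : Set (List ι × List ι)} {h : ι → List ℕ} (hS : IsSolution S h) (hne : ∀ i, h i ≠ []) :
    ∃ A : Finset (List ℕ),
      A.card ≤ Nat.card (headGraph S).ConnectedComponent ∧ ∀ i, InStar A (h i) := by
  induction hN : ∑ i, (h i).length using Nat.strong_induction_on generalizing ι with
  | _ N IH =>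
  have reduce : ∀ {ι' : Type _} [Fintype ι'] [DecidableEq ι'] {S' : Set (List ι' × List ι')}
      {h' : ι' → List ℕ}, IsReduction S h S' h' → ∃ A : Finset (List ℕ),
        A.card ≤ Nat.card (headGraph S).ConnectedComponent ∧ ∀ i, InStar A (h i) := by
    intro ι' _ _ S' h' hred
    obtain ⟨A, hA, hAh⟩ := IH _ (hN ▸ hred.length_lt) hred.isSolution hred.ne_nil rfl
    exact ⟨A, hA.trans hred.card_le, hred.inStar A hAh⟩
  by_cases hadj : ∃ a b, (headGraph S).Adj a b
  · obtain ⟨a, b, hab⟩ := hadj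
    obtain ⟨x, y, hxy, d, u, v, hxd, hvd⟩ := hS.exists_eq_append_of_adj hab
    rcases eq_or_ne d [] with rfl | hd
    · exact reduce (isReduction_of_eq hne hS hxy (by simpa using hxd))
    · exact reduce (isReduction_of_eq_append hne hS hxy hd hxd hvd)
  · simp only [not_exists] at hadj
    refine ⟨Finset.univ.image h, ?_, fun i => ⟨[h i], by simp, by simp⟩⟩
    calc (Finset.univ.image h).card ≤ Nat.card ι := by
          simpa using Finset.card_image_le (s := Finset.univ) (f := h)
      _ ≤ _ := card_le_card_connectedComponent_of_forall_not_adj _ hadj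

end WordEquations

theorem graph_lemma_general {n m : ℕ}
    (eqs : Fin m → List (Fin n) × List (Fin n))
    (G : SimpleGraph (Fin n))
    (hG : ∀ x y : Fin n, G.Adj x y ↔ x ≠ y ∧ ∃ i : Fin m,
      ((eqs i).1.head? = some x ∧ (eqs i).2.head? = some y) ∨
      ((eqs i).1.head? = some y ∧ (eqs i).2.head? = some x))
    (r : ℕ) (hr : Nat.card G.ConnectedComponent = r)
    (h : Fin n → List ℕ)
    (hne : ∀ i, h i ≠ [])
    (hsol : ∀ i, mApply h (eqs i).1 = mApply h (eqs i).2) :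
    mRank h ≤ r := by
  have hGS : G = headGraph (Set.range eqs) := by
    ext x y
    simp only [hG, headGraph, fromRel_adj, Set.exists_range_iff, exists_or]
  have hS : IsSolution (Set.range eqs) h := by
    rintro _ ⟨i, rfl⟩
    simpa only [mApply, List.flatMap_def] using hsol i
  obtain ⟨A, hA, hAh⟩ := hS.exists_inStar_card_le hne
  calc mRank h ≤ A.card := mRank_le_card_s9 hAh
    _ ≤ r := hr ▸ hGS ▸ hA

/-- Graph lemma: consider the graph on the unknowns with an edge between distinct `x` and
`y` whenever some equation of the system has left-hand side beginning with `x` and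
right-hand side beginning with `y` (or vice versa). If this graph has `r` connected
components and `h` is a nonerasing solution of the system, then the rank of `h` is at
most `r`. -/
theorem graph_lemma {n m : ℕ}
    (A : Finset ℕ) (hA : ∀ a ∈ A, 0 < a)
    (eqs : Fin m → List (Fin n) × List (Fin n))
    (G : SimpleGraph (Fin n))
    (hG : ∀ x y : Fin n, G.Adj x y ↔ x ≠ y ∧ ∃ i : Fin m,
      ((eqs i).1.head? = some x ∧ (eqs i).2.head? = some y) ∨
      ((eqs i).1.head? = some y ∧ (eqs i).2.head? = some x))
    (r : ℕ) (hr : Nat.card G.ConnectedComponent = r)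
    (h : Fin n → List ℕ) (hh : IntoAlph A h)
    (hne : ∀ i, h i ≠ [])
    (hsol : ∀ i, mApply h (eqs i).1 = mApply h (eqs i).2) :
    mRank h ≤ r :=
  graph_lemma_general eqs G hG r hr h hne hsol
end

section
/- Let m, n ≥ 1, let s₀, …, s_m, t₀, …, t_n ∈ Σ* and u₁, …, u_m, v₁, …, v_n ∈ Σ⁺ be words over a finite set Σ of positive integers, and for i ∈ ℕ define U_i = s₀ u₁^i s₁ u₂^i s₂ ⋯ u_m^i s_m and V_i = t₀ v₁^i t₁ v₂^i t₂ ⋯ v_n^i t_n. If U_i = V_i holds for at least m + n distinct values of i ∈ ℕ, then U_i = V_i holds for all i ∈ ℕ. -/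
/-!
Read words as base-`b` numerals, `b` exceeding every letter. Then the value of `Uᵢ` is `P(bⁱ)`
for a rational polynomial `P` whose exponents are `0` and the partial sums
`|u₁|, |u₁u₂|, …, |u₁⋯u_m|`, and similarly `Vᵢ ↦ Q(bⁱ)`. Agreement at two values of `i` forces
`|Uᵢ| = |Vᵢ|` for every `i`, so `|u₁⋯u_m| = |v₁⋯v_n|` is an exponent shared by `P` and `Q`, and
`P - Q` has at most `m + n` monomials. By Descartes' rule of signs it then has fewer than `m + n`
positive roots unless it vanishes, while it vanishes at the `m + n` points `bⁱ`, `i ∈ T`. So `Uᵢ`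
and `Vᵢ` always have the same length and the same value, hence are equal.
-/

open Polynomial

/-- Concatenation power of a word. -/
def wpow {α : Type*} (u : List α) : ℕ → List α
  | 0 => []
  | k + 1 => u ++ wpow u k

/-- A nonempty word is primitive if it is not a proper power. -/
def Primitive (w : List ℕ) : Prop :=
  w ≠ [] ∧ ∀ (u : List ℕ) (k : ℕ), 1 < k → w ≠ wpow u k

open Finset

namespace Polynomial

theorem signVariations_lt_card_support {R : Type*} [Semiring R] [LinearOrder R] {P : R[X]}
    (hP : P ≠ 0) : signVariations P < #P.support := by
  obtain ⟨n, hn⟩ : ∃ n, #P.support = n := ⟨_, rfl⟩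
  induction n generalizing P with
  | zero => simp_all
  | succ n ih =>
    by_cases hE : P.eraseLead = 0
    · have hmono : P = monomial P.natDegree P.leadingCoeff := by
        simpa [hE] using (eraseLead_add_monomial_natDegree_leadingCoeff P).symm
      have : signVariations P = 0 := by rw [hmono, signVariations_monomial]
      omega
    · have hcard := card_support_eraseLead_add_one hP
      have := ih hE (by omega)
      have := signVariations_le_eraseLead_succ P
      omega

theorem eq_zero_of_card_support_le_of_isRoot {R : Type*} [CommRing R] [LinearOrder R]
    [IsStrictOrderedRing R] {P : R[X]} {x : Finset R} (hpos : ∀ a ∈ x, 0 < a)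
    (hroot : ∀ a ∈ x, P.IsRoot a) (hcard : #P.support ≤ #x) : P = 0 := by
  by_contra hP
  have hsub : x ⊆ (P.roots.filter (0 < ·)).toFinset := fun a ha => by
    simpa [hpos a ha, hP] using hroot a ha
  have := (card_le_card hsub).trans (P.roots.filter (0 < ·)).toFinset_card_le
  rw [← Multiset.countP_eq_card_filter] at this
  have := P.roots_countP_pos_le_signVariations
  have := signVariations_lt_card_support hP
  omega

end Polynomial

lemma eq_and_eq_of_add_mul_eq_add_mul {a b c d i j : ℕ} (hij : i ≠ j)
    (hi : a + i * b = c + i * d) (hj : a + j * b = c + j * d) : a = c ∧ b = d := by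
  have hbd : b = d := by
    zify at hi hj
    have : ((i : ℤ) - j) * ((b : ℤ) - d) = 0 := by linear_combination hi - hj
    rcases mul_eq_zero.mp this with h | h <;> omega
  subst hbd
  exact ⟨by omega, rfl⟩

open Nat (ofDigits)

lemma length_wpow {α : Type*} (u : List α) (i : ℕ) : (wpow u i).length = i * u.length := by
  induction i with
  | zero => simp [wpow]
  | succ i ih => simp [wpow, ih, add_mul, add_comm]

lemma mem_of_mem_wpow {α : Type*} {u : List α} {i : ℕ} {a : α} (h : a ∈ wpow u i) : a ∈ u := by
  induction i with
  | zero => simp [wpow] at h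
  | succ i ih => rcases List.mem_append.mp h with h | h <;> tauto

lemma ofDigits_cast_append (b : ℕ) (w w' : List ℕ) :
    ofDigits (b : ℚ) (w ++ w') = ofDigits (b : ℚ) w + (b : ℚ) ^ w.length * ofDigits (b : ℚ) w' := by
  rw [← Nat.coe_ofDigits, Nat.ofDigits_append]
  push_cast
  rfl

lemma ofDigits_cast_wpow {b : ℕ} (hb : 1 < b) (u : List ℕ) (i : ℕ) :
    ofDigits (b : ℚ) (wpow u i) =
      ofDigits (b : ℚ) u / ((b : ℚ) ^ u.length - 1) * (((b : ℚ) ^ i) ^ u.length - 1) := by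
  set γ := ofDigits (b : ℚ) u / ((b : ℚ) ^ u.length - 1)
  -- for `u = []` this reads `0 / 0 * 0 = 0`
  have hγ : γ * ((b : ℚ) ^ u.length - 1) = ofDigits (b : ℚ) u := by
    rcases eq_or_ne u [] with rfl | hu
    · simp [Nat.ofDigits]
    · have : (1 : ℚ) < (b : ℚ) ^ u.length :=
        one_lt_pow₀ (by exact_mod_cast hb) (List.length_pos_iff.mpr hu).ne'
      exact div_mul_cancel₀ _ (sub_ne_zero.mpr this.ne')
  induction i with
  | zero => simp [wpow, Nat.ofDigits]
  | succ i ih =>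
    rw [wpow, ofDigits_cast_append, ih, pow_succ, mul_pow]
    linear_combination -hγ

def powerWord {m : ℕ} (s : Fin (m + 1) → List ℕ) (u : Fin m → List ℕ) (i : ℕ) : List ℕ :=
  (List.ofFn fun j : Fin m => s j.castSucc ++ wpow (u j) i).flatten ++ s (Fin.last m)

lemma powerWord_zero (s : Fin 1 → List ℕ) (u : Fin 0 → List ℕ) (i : ℕ) :
    powerWord s u i = s 0 := by
  simp [powerWord]

lemma powerWord_succ {m : ℕ} (s : Fin (m + 2) → List ℕ) (u : Fin (m + 1) → List ℕ) (i : ℕ) :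
    powerWord s u i = s 0 ++ wpow (u 0) i ++ powerWord (Fin.tail s) (Fin.tail u) i := by
  simp [powerWord, List.ofFn_succ, Fin.tail]

lemma length_powerWord {m : ℕ} (s : Fin (m + 1) → List ℕ) (u : Fin m → List ℕ) (i : ℕ) :
    (powerWord s u i).length = ∑ j, (s j).length + i * ∑ j, (u j).length := by
  simp only [powerWord, List.length_append, List.length_flatten, List.map_ofFn, List.sum_ofFn,
    Function.comp_apply, length_wpow, sum_add_distrib, Fin.sum_univ_castSucc, mul_sum]
  ring

/-- The partial sums `|u₀| + ⋯ + |u_k|`, `k < m`. -/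
def powerBreaks : {m : ℕ} → (Fin m → List ℕ) → Finset ℕ
  | 0, _ => ∅
  | _ + 1, u => (insert 0 (powerBreaks (Fin.tail u))).image ((u 0).length + ·)

lemma card_powerBreaks_le {m : ℕ} (u : Fin m → List ℕ) : #(powerBreaks u) ≤ m := by
  induction m with
  | zero => simp [powerBreaks]
  | succ m ih =>
    exact card_image_le.trans ((card_insert_le _ _).trans (Nat.succ_le_succ (ih _)))

lemma sum_length_mem_powerBreaks {m : ℕ} (hm : m ≠ 0) (u : Fin m → List ℕ) :
    ∑ j, (u j).length ∈ powerBreaks u := by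
  induction m with
  | zero => exact absurd rfl hm
  | succ m ih =>
    refine mem_image.mpr
      ⟨∑ j, (Fin.tail u j).length, ?_, (Fin.sum_univ_succ fun j => (u j).length).symm⟩
    rcases eq_or_ne m 0 with rfl | hm'
    · simp
    · exact mem_insert_of_mem (ih hm' _)

noncomputable def powerWordPoly (b : ℕ) :
    {m : ℕ} → (Fin (m + 1) → List ℕ) → (Fin m → List ℕ) → ℚ[X]
  | 0, s, _ => C (ofDigits (b : ℚ) (s 0))
  | _ + 1, s, u =>
    C (ofDigits (b : ℚ) (s 0)) + C ((b : ℚ) ^ (s 0).length) *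
      (C (ofDigits (b : ℚ) (u 0) / ((b : ℚ) ^ (u 0).length - 1)) * (X ^ (u 0).length - 1) +
        X ^ (u 0).length * powerWordPoly b (Fin.tail s) (Fin.tail u))

lemma eval_powerWordPoly {b : ℕ} (hb : 1 < b) {m : ℕ} (s : Fin (m + 1) → List ℕ)
    (u : Fin m → List ℕ) (i : ℕ) :
    (powerWordPoly b s u).eval ((b : ℚ) ^ i) = ofDigits (b : ℚ) (powerWord s u i) := by
  induction m with
  | zero => simp [powerWordPoly, powerWord_zero]
  | succ m ih =>
    rw [powerWord_succ, List.append_assoc, ofDigits_cast_append, ofDigits_cast_append,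
      ofDigits_cast_wpow hb, ← ih, length_wpow, powerWordPoly]
    simp only [eval_add, eval_mul, eval_C, eval_sub, eval_pow, eval_X, eval_one]
    ring

lemma support_powerWordPoly_subset (b : ℕ) {m : ℕ} (s : Fin (m + 1) → List ℕ)
    (u : Fin m → List ℕ) : (powerWordPoly b s u).support ⊆ insert 0 (powerBreaks u) := by
  induction m with
  | zero => simpa [powerWordPoly, powerBreaks] using support_C_subset _
  | succ m ih =>
    intro d hd
    contrapose hd
    simp only [powerBreaks, mem_insert, mem_image, not_or, not_exists, not_and] at hd
    obtain ⟨hd0, hdu⟩ := hd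
    have hdk : d ≠ (u 0).length := fun h => hdu 0 (Or.inl rfl) (by simp [h])
    rw [notMem_support_iff, powerWordPoly]
    simp only [coeff_add, coeff_C_mul, coeff_C, coeff_sub, coeff_X_pow, coeff_one,
      coeff_X_pow_mul', if_neg hd0, if_neg hdk]
    split_ifs with hle
    · have := notMem_support_iff.mp fun h =>
        hdu (d - (u 0).length) (mem_insert.mp (ih (Fin.tail s) _ h)) (by omega)
      simp [this]
    · simp

lemma forall_mem_powerWord {p : ℕ → Prop} {m : ℕ} {s : Fin (m + 1) → List ℕ}
    {u : Fin m → List ℕ} (hs : ∀ j, ∀ a ∈ s j, p a) (hu : ∀ j, ∀ a ∈ u j, p a) (i : ℕ) :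
    ∀ a ∈ powerWord s u i, p a := by
  intro a ha
  simp only [powerWord, List.mem_append, List.mem_flatten, List.mem_ofFn] at ha
  grind [mem_of_mem_wpow]

lemma card_support_powerWordPoly_sub_le (b : ℕ) {m n : ℕ} (hm : m ≠ 0) (hn : n ≠ 0)
    (s : Fin (m + 1) → List ℕ) (u : Fin m → List ℕ) (t : Fin (n + 1) → List ℕ)
    (v : Fin n → List ℕ) (hL : ∑ j, (u j).length = ∑ j, (v j).length) :
    #(powerWordPoly b s u - powerWordPoly b t v).support ≤ m + n := by
  have hsub : (powerWordPoly b s u - powerWordPoly b t v).support ⊆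
      insert 0 (powerBreaks u ∪ powerBreaks v) := by
    rw [insert_union_distrib, sub_eq_add_neg]
    refine support_add.trans (union_subset_union (support_powerWordPoly_subset _ _ _) ?_)
    rw [support_neg]
    exact support_powerWordPoly_subset _ _ _
  have hinter : 0 < #(powerBreaks u ∩ powerBreaks v) :=
    card_pos.mpr ⟨_, mem_inter.mpr
      ⟨sum_length_mem_powerBreaks hm u, hL ▸ sum_length_mem_powerBreaks hn v⟩⟩
  have := card_union_add_card_inter (powerBreaks u) (powerBreaks v)
  have := card_powerBreaks_le u
  have := card_powerBreaks_le v
  have := (card_le_card hsub).trans (card_insert_le _ _)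
  omega

lemma sum_length_eq_of_powerWord_eq {m n : ℕ} {s : Fin (m + 1) → List ℕ} {u : Fin m → List ℕ}
    {t : Fin (n + 1) → List ℕ} {v : Fin n → List ℕ} {i j : ℕ} (hij : i ≠ j)
    (hi : powerWord s u i = powerWord t v i) (hj : powerWord s u j = powerWord t v j) :
    ∑ k, (s k).length = ∑ k, (t k).length ∧ ∑ k, (u k).length = ∑ k, (v k).length := by
  have hi := congrArg List.length hi
  have hj := congrArg List.length hj
  rw [length_powerWord, length_powerWord] at hi hj
  exact eq_and_eq_of_add_mul_eq_add_mul hij hi hj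

lemma powerWordPoly_eq_of_powerWord_eq {b : ℕ} (hb : 1 < b) {m n : ℕ} (hm : m ≠ 0) (hn : n ≠ 0)
    {s : Fin (m + 1) → List ℕ} {u : Fin m → List ℕ} {t : Fin (n + 1) → List ℕ}
    {v : Fin n → List ℕ} (hL : ∑ k, (u k).length = ∑ k, (v k).length) {T : Finset ℕ}
    (hT : m + n ≤ #T) (hST : ∀ i ∈ T, powerWord s u i = powerWord t v i) :
    powerWordPoly b s u = powerWordPoly b t v := by
  rw [← sub_eq_zero]
  refine eq_zero_of_card_support_le_of_isRoot (x := T.image fun i => (b : ℚ) ^ i) ?_ ?_ ?_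
  · simp only [mem_image]
    rintro _ ⟨i, -, rfl⟩
    positivity
  · simp only [mem_image]
    rintro _ ⟨i, hi, rfl⟩
    rw [IsRoot, eval_sub, eval_powerWordPoly hb, eval_powerWordPoly hb, hST i hi, sub_self]
  · rw [card_image_of_injective _ (pow_right_injective₀ (by positivity) (by exact_mod_cast hb.ne'))]
    exact (card_support_powerWordPoly_sub_le b hm hn s u t v hL).trans hT

theorem power_equation_all_of_finitely_many_general
    (S : Finset ℕ)
    (m n : ℕ) (hm : 1 ≤ m) (hn : 1 ≤ n)
    (s : Fin (m + 1) → List ℕ) (t : Fin (n + 1) → List ℕ)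
    (u : Fin m → List ℕ) (v : Fin n → List ℕ)
    (hs : ∀ j, ∀ a ∈ s j, a ∈ S) (ht : ∀ j, ∀ a ∈ t j, a ∈ S)
    (hua : ∀ j, ∀ a ∈ u j, a ∈ S) (hva : ∀ j, ∀ a ∈ v j, a ∈ S)
    (U V : ℕ → List ℕ)
    (hU : ∀ i, U i =
      (List.ofFn fun j : Fin m => s j.castSucc ++ wpow (u j) i).flatten ++ s (Fin.last m))
    (hV : ∀ i, V i =
      (List.ofFn fun j : Fin n => t j.castSucc ++ wpow (v j) i).flatten ++ t (Fin.last n))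
    (T : Finset ℕ) (hT : m + n ≤ T.card) (hUV : ∀ i ∈ T, U i = V i) :
    ∀ i : ℕ, U i = V i := by
  have hU' : ∀ i, U i = powerWord s u i := hU
  have hV' : ∀ i, V i = powerWord t v i := hV
  simp only [hU', hV'] at hUV ⊢
  obtain ⟨i₁, hi₁, i₂, hi₂, hne⟩ := one_lt_card.mp (by omega : 1 < #T)
  obtain ⟨hA, hL⟩ := sum_length_eq_of_powerWord_eq hne (hUV i₁ hi₁) (hUV i₂ hi₂)
  set b := S.sup id + 2
  have hb : 1 < b := by omega
  have hSb : ∀ a ∈ S, a < b := fun a ha => (le_sup (f := id) ha).trans_lt (by omega)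
  have hP := powerWordPoly_eq_of_powerWord_eq hb (by omega) (by omega) hL hT hUV
  intro i
  refine Nat.ofDigits_inj_of_len_eq hb (by rw [length_powerWord, length_powerWord, hA, hL])
    (fun a ha => hSb a (forall_mem_powerWord hs hua i a ha))
    (fun a ha => hSb a (forall_mem_powerWord ht hva i a ha)) ?_
  exact_mod_cast (eval_powerWordPoly hb s u i).symm.trans
    ((congrArg (eval _) hP).trans (eval_powerWordPoly hb t v i))

/-- Let `Uᵢ = s₀ u₁ⁱ s₁ ⋯ u_mⁱ s_m` and `Vᵢ = t₀ v₁ⁱ t₁ ⋯ v_nⁱ t_n`, where the `sⱼ, tⱼ`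
are words and the `uⱼ, vⱼ` are nonempty words over a finite alphabet of positive integers
and `m, n ≥ 1`. If `Uᵢ = Vᵢ` holds for at least `m + n` distinct values of `i`, then it
holds for all `i`. -/
theorem power_equation_all_of_finitely_many
    (S : Finset ℕ) (hS : ∀ a ∈ S, 0 < a)
    (m n : ℕ) (hm : 1 ≤ m) (hn : 1 ≤ n)
    (s : Fin (m + 1) → List ℕ) (t : Fin (n + 1) → List ℕ)
    (u : Fin m → List ℕ) (v : Fin n → List ℕ)
    (hs : ∀ j, ∀ a ∈ s j, a ∈ S) (ht : ∀ j, ∀ a ∈ t j, a ∈ S)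
    (hua : ∀ j, ∀ a ∈ u j, a ∈ S) (hva : ∀ j, ∀ a ∈ v j, a ∈ S)
    (hu0 : ∀ j, u j ≠ []) (hv0 : ∀ j, v j ≠ [])
    (U V : ℕ → List ℕ)
    (hU : ∀ i, U i =
      (List.ofFn fun j : Fin m => s j.castSucc ++ wpow (u j) i).flatten ++ s (Fin.last m))
    (hV : ∀ i, V i =
      (List.ofFn fun j : Fin n => t j.castSucc ++ wpow (v j) i).flatten ++ t (Fin.last n))
    (T : Finset ℕ) (hT : m + n ≤ T.card) (hUV : ∀ i ∈ T, U i = V i) :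
    ∀ i : ℕ, U i = V i :=
  power_equation_all_of_finitely_many_general S m n hm hn s t u v hs ht hua hva U V hU hV T hT hUV
end
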